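/- Let f : ℝ^d → ℝ be ρ-weakly convex, lsc, bounded below, with 0 < λ < 1/ρ. Let x^{k+1} = x^k - (β_k/‖g(x^k)‖) g(x^k) with g(x^k) ∈ ∂f(x^k) nonzero and β_k > 0. Then for all k, f_λ(x^{k+1}) ≤ f_λ(x^0) + (1/(2λ)) Σ_{j=0}^{k} β_j². -/

import Mathlib

open scoped InnerProductSpace BigOperators

/-!
The proximal point `p x` of the current iterate `x` decreases `f` by at least
`‖p x - x‖² / (2λ)`, while the weak-convexity inequality at `x` bounds that decrease by
`⟪g, x - p x⟫ + (ρ/2)‖p x - x‖²`. Since `ρλ ≤ 1`, this forces `⟪g, p x - x⟫ ≤ 0`: a step of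
length `β` along `-g` moves away from `p x` by at most `β` in the Pythagorean sense,
`‖p x - x⁺‖² ≤ ‖p x - x‖² + β²`. Testing the envelope at `x⁺` with the old proximal point gives
`f_λ(x⁺) ≤ f_λ(x) + β²/(2λ)`, and the claim follows by telescoping.
-/

theorem le_add_sum_range_of_le_add {α : Type*} [AddCommGroup α] [PartialOrder α]
    [IsOrderedAddMonoid α] {a b : ℕ → α} (h : ∀ k, a (k + 1) ≤ a k + b k) (n : ℕ) :
    a n ≤ a 0 + ∑ j ∈ Finset.range n, b j := by
  induction n with
  | zero => simp
  | succ n ih =>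
    rw [Finset.sum_range_succ, ← add_assoc]
    exact (h n).trans (add_le_add_left ih _)

section InnerProductSpace

variable {E : Type*} [NormedAddCommGroup E] [InnerProductSpace ℝ E]

theorem norm_div_norm_smul_le (t : ℝ) (g : E) : ‖(t / ‖g‖) • g‖ ≤ |t| := by
  rcases eq_or_ne g 0 with rfl | hg
  · simp
  · rw [norm_smul, Real.norm_eq_abs, abs_div, abs_norm,
      div_mul_cancel₀ _ (norm_ne_zero_iff.mpr hg)]

theorem norm_sub_normalized_step_sq_le {p x g : E} {β : ℝ} (hβ : 0 ≤ β)
    (hinner : ⟪g, p - x⟫_ℝ ≤ 0) :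
    ‖p - (x - (β / ‖g‖) • g)‖ ^ 2 ≤ ‖p - x‖ ^ 2 + β ^ 2 := by
  have hcross : ⟪p - x, (β / ‖g‖) • g⟫_ℝ ≤ 0 := by
    rw [real_inner_smul_right, real_inner_comm]
    exact mul_nonpos_of_nonneg_of_nonpos (by positivity) hinner
  have hstep : ‖(β / ‖g‖) • g‖ ^ 2 ≤ β ^ 2 := by
    simpa only [sq_abs] using pow_le_pow_left₀ (norm_nonneg _) (norm_div_norm_smul_le β g) 2
  rw [sub_sub_eq_add_sub, add_sub_right_comm, norm_add_sq_real]
  linarith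

theorem inner_sub_nonpos_of_weakConvex_of_descent {f : E → ℝ} {ρ lam : ℝ} {x p g : E}
    (hlam : 0 < lam) (hρlam : ρ * lam ≤ 1)
    (hsub : f x + ⟪g, p - x⟫_ℝ - (ρ / 2) * ‖x - p‖ ^ 2 ≤ f p)
    (hdesc : f p + ‖p - x‖ ^ 2 / (2 * lam) ≤ f x) :
    ⟪g, p - x⟫_ℝ ≤ 0 := by
  rw [norm_sub_rev] at hsub
  have hquad : (ρ / 2) * ‖p - x‖ ^ 2 ≤ ‖p - x‖ ^ 2 / (2 * lam) := by
    rw [le_div_iff₀ (by positivity)]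
    nlinarith [mul_le_mul_of_nonneg_right hρlam (sq_nonneg ‖p - x‖)]
  linarith

theorem moreauEnvelope_normalized_step_le {f flam : E → ℝ} {p : E → E} {ρ lam β : ℝ} {x g : E}
    (hlam : 0 < lam) (hρlam : ρ * lam ≤ 1)
    (hprox : ∀ x y, f (p x) + ‖p x - x‖ ^ 2 / (2 * lam) ≤ f y + ‖y - x‖ ^ 2 / (2 * lam))
    (hflam : ∀ x, flam x = f (p x) + ‖p x - x‖ ^ 2 / (2 * lam))
    (hβ : 0 ≤ β) (hsub : ∀ y, f x + ⟪g, y - x⟫_ℝ - (ρ / 2) * ‖x - y‖ ^ 2 ≤ f y) :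
    flam (x - (β / ‖g‖) • g) ≤ flam x + β ^ 2 / (2 * lam) := by
  set q := p x
  have hdesc : f q + ‖q - x‖ ^ 2 / (2 * lam) ≤ f x := by
    simpa using hprox x x
  have hinner : ⟪g, q - x⟫_ℝ ≤ 0 :=
    inner_sub_nonpos_of_weakConvex_of_descent hlam hρlam (hsub q) hdesc
  rw [hflam, hflam]
  calc _ ≤ f q + ‖q - (x - (β / ‖g‖) • g)‖ ^ 2 / (2 * lam) := hprox _ q
    _ ≤ f q + (‖q - x‖ ^ 2 + β ^ 2) / (2 * lam) := by
        gcongr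
        exact norm_sub_normalized_step_sq_le hβ hinner
    _ = f q + ‖q - x‖ ^ 2 / (2 * lam) + β ^ 2 / (2 * lam) := by ring

end InnerProductSpace

theorem moreau_values_bounded_general
    (d : ℕ) (f : EuclideanSpace ℝ (Fin d) → ℝ) (ρ lam : ℝ)
    (hρ : 0 < ρ) (hlam : 0 < lam) (hlamρ : lam < 1 / ρ)
    (flam : EuclideanSpace ℝ (Fin d) → ℝ)
    (p : EuclideanSpace ℝ (Fin d) → EuclideanSpace ℝ (Fin d))
    (hprox : ∀ x y, f (p x) + ‖p x - x‖ ^ 2 / (2 * lam) ≤ f y + ‖y - x‖ ^ 2 / (2 * lam))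
    (hflam : ∀ x, flam x = f (p x) + ‖p x - x‖ ^ 2 / (2 * lam))
    (x g : ℕ → EuclideanSpace ℝ (Fin d)) (β : ℕ → ℝ)
    (hβ : ∀ k, 0 < β k)
    (hsub : ∀ k y, f (x k) + ⟪g k, y - x k⟫_ℝ - (ρ / 2) * ‖x k - y‖ ^ 2 ≤ f y)
    (hupd : ∀ k, x (k + 1) = x k - (β k / ‖g k‖) • g k) :
    ∀ k, flam (x (k + 1)) ≤ flam (x 0)
      + (1 / (2 * lam)) * ∑ j ∈ Finset.range (k + 1), (β j) ^ 2 := by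
  intro k
  have hρlam : ρ * lam ≤ 1 := by
    rw [mul_comm]
    exact ((lt_div_iff₀ hρ).mp hlamρ).le
  have hstep : ∀ j, flam (x (j + 1)) ≤ flam (x j) + β j ^ 2 / (2 * lam) := fun j => by
    rw [hupd j]
    exact moreauEnvelope_normalized_step_le hlam hρlam hprox hflam (hβ j).le (hsub j)
  calc flam (x (k + 1)) ≤ flam (x 0) + ∑ j ∈ Finset.range (k + 1), β j ^ 2 / (2 * lam) :=
        le_add_sum_range_of_le_add (a := fun j => flam (x j)) hstep (k + 1)
    _ = _ := by rw [← Finset.sum_div]; ring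

/-- Uniform upper bound on Moreau envelope values along the subgradient trajectory. -/
theorem moreau_values_bounded
    (d : ℕ) (f : EuclideanSpace ℝ (Fin d) → ℝ) (ρ lam : ℝ)
    (hρ : 0 < ρ) (hlam : 0 < lam) (hlamρ : lam < 1 / ρ)
    (hwc : ConvexOn ℝ Set.univ (fun x => f x + (ρ / 2) * ‖x‖ ^ 2))
    (hlsc : LowerSemicontinuous f)
    (hbdd : BddBelow (Set.range f))
    (flam : EuclideanSpace ℝ (Fin d) → ℝ)
    (p : EuclideanSpace ℝ (Fin d) → EuclideanSpace ℝ (Fin d))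
    (hprox : ∀ x y, f (p x) + ‖p x - x‖ ^ 2 / (2 * lam) ≤ f y + ‖y - x‖ ^ 2 / (2 * lam))
    (hflam : ∀ x, flam x = f (p x) + ‖p x - x‖ ^ 2 / (2 * lam))
    (x g : ℕ → EuclideanSpace ℝ (Fin d)) (β : ℕ → ℝ)
    (hβ : ∀ k, 0 < β k) (hg : ∀ k, g k ≠ 0)
    (hsub : ∀ k y, f (x k) + ⟪g k, y - x k⟫_ℝ - (ρ / 2) * ‖x k - y‖ ^ 2 ≤ f y)
    (hupd : ∀ k, x (k + 1) = x k - (β k / ‖g k‖) • g k) :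
    ∀ k, flam (x (k + 1)) ≤ flam (x 0)
      + (1 / (2 * lam)) * ∑ j ∈ Finset.range (k + 1), (β j) ^ 2 :=
  moreau_values_bounded_general d f ρ lam hρ hlam hlamρ flam p hprox hflam x g β hβ hsub hupd
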